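/- arXiv:math/9802109 — 3 statements merged into one kernel-verified Lean document; each statement's English description precedes it below -/
import Mathlib

section
/- Let G be a compact Hausdorff topological group with normalized Haar probability measure μ, let g₀ ∈ G and let Z₀ be the centralizer of g₀ in G (a closed, hence compact, subgroup) with normalized Haar probability measure ν. Let (T, V) be a strongly continuous unitary representation of G on a complex Hilbert space V. If f₁, f₂ : G → ℂ are continuous functions with equal Z₀-averages, i.e. ∫_{Z₀} f₁(xh) dν(h) = ∫_{Z₀} f₂(xh) dν(h) for every x ∈ G, then the corresponding weighted class operators coincide: T(f₁; g₀) = T(f₂; g₀), i.e. for every v ∈ V, ∫_G f₁(x) • T(x)(T(g₀)(T(x)⁻¹ v)) dμ(x) = ∫_G f₂(x) • T(x)(T(g₀)(T(x)⁻¹ v)) dμ(x). -/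
open MeasureTheory
open scoped ComplexInnerProductSpace

/-!
Because `T` is multiplicative, the integrand is `f x • T (x * g₀ * x⁻¹) v`, and
`x ↦ T (x * g₀ * x⁻¹) v` is invariant under right translation by the centralizer `Z₀`.
A probability Haar measure on a compact group is also right invariant, so `f` may be replaced
by `f (· * h)` for every `h ∈ Z₀`; averaging over `h` against `ν` and swapping the two
integrals (Fubini for continuous functions on a compact space) replaces `f` by its `Z₀`-average.
-/

theorem MeasureTheory.Measure.isMulRightInvariant_of_isHaarMeasure_of_isProbabilityMeasure
    {G : Type*} [Group G] [TopologicalSpace G] [IsTopologicalGroup G] [LocallyCompactSpace G]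
    [MeasurableSpace G] [BorelSpace G] (μ : Measure G) [μ.IsHaarMeasure] [IsProbabilityMeasure μ] :
    μ.IsMulRightInvariant where
  map_mul_right_eq_self g := by
    have : IsProbabilityMeasure (μ.map (· * g)) :=
      isProbabilityMeasure_map (measurable_mul_const g).aemeasurable
    exact isHaarMeasure_eq_of_isProbabilityMeasure _ _

theorem MeasureTheory.integral_smul_eq_integral_average_smul
    {G 𝕜 E : Type*} [Group G] [TopologicalSpace G] [IsTopologicalGroup G] [CompactSpace G]
    [MeasurableSpace G] [BorelSpace G] (μ : Measure G) [μ.IsMulRightInvariant] [IsFiniteMeasure μ]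
    (H : Subgroup G) [CompactSpace H] [MeasurableSpace H] [BorelSpace H]
    (ν : Measure H) [IsProbabilityMeasure ν]
    [RCLike 𝕜] [NormedAddCommGroup E] [NormedSpace ℝ E] [NormedSpace 𝕜 E] [CompleteSpace E]
    {f : G → 𝕜} (hf : Continuous f) {A : G → E} (hA : Continuous A)
    (hAH : ∀ x, ∀ h ∈ H, A (x * h) = A x) :
    ∫ x, f x • A x ∂μ = ∫ x, (∫ h, f (x * h) ∂ν) • A x ∂μ := by
  have translate (h : H) : ∫ x, f (x * h) • A x ∂μ = ∫ x, f x • A x ∂μ := by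
    simpa only [hAH _ h h.2] using integral_mul_right_eq_self (μ := μ) (fun x => f x • A x) h
  have hF : Continuous (Function.uncurry fun (h : H) (x : G) => f (x * h) • A x) := by
    fun_prop
  calc ∫ x, f x • A x ∂μ = ∫ h, (∫ x, f (x * h) • A x ∂μ) ∂ν := by simp [translate]
    _ = ∫ x, (∫ h, f (x * h) • A x ∂ν) ∂μ :=
      integral_integral_swap_of_hasCompactSupport hF (.of_compactSpace _)
    _ = ∫ x, (∫ h, f (x * h) ∂ν) • A x ∂μ := by simp only [integral_smul_const]

theorem weighted_class_operator_factors_through_average_general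
    {G : Type*} [Group G] [TopologicalSpace G] [IsTopologicalGroup G]
    [CompactSpace G] [T2Space G] [MeasurableSpace G] [BorelSpace G]
    (μ : Measure G) [μ.IsHaarMeasure] [IsProbabilityMeasure μ]
    (g₀ : G)
    [MeasurableSpace (Subgroup.centralizer ({g₀} : Set G))]
    [BorelSpace (Subgroup.centralizer ({g₀} : Set G))]
    (ν : Measure (Subgroup.centralizer ({g₀} : Set G)))
    [IsProbabilityMeasure ν]
    {V : Type*} [NormedAddCommGroup V] [InnerProductSpace ℂ V] [CompleteSpace V]
    (T : G → V →L[ℂ] V)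
    (hTmul : ∀ g h : G, T (g * h) = (T g).comp (T h))
    (hTcont : ∀ v : V, Continuous fun g : G => T g v)
    (f₁ f₂ : G → ℂ) (hf₁ : Continuous f₁) (hf₂ : Continuous f₂)
    (havg : ∀ x : G,
      (∫ h : Subgroup.centralizer ({g₀} : Set G), f₁ (x * (h : G)) ∂ν) =
        ∫ h : Subgroup.centralizer ({g₀} : Set G), f₂ (x * (h : G)) ∂ν) :
    ∀ v : V,
      (∫ x, f₁ x • T x (T g₀ (T x⁻¹ v)) ∂μ) =
        ∫ x, f₂ x • T x (T g₀ (T x⁻¹ v)) ∂μ := by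
  intro v
  have := μ.isMulRightInvariant_of_isHaarMeasure_of_isProbabilityMeasure
  have : CompactSpace (Subgroup.centralizer ({g₀} : Set G)) :=
    isCompact_iff_compactSpace.mp (Set.isClosed_centralizer _).isCompact
  have hconj (x : G) : T x (T g₀ (T x⁻¹ v)) = T (x * g₀ * x⁻¹) v := by
    simp only [hTmul, ContinuousLinearMap.comp_apply]
  have hcont : Continuous fun x => T (x * g₀ * x⁻¹) v := by fun_prop
  have hinv (x : G) (h) (hh : h ∈ Subgroup.centralizer ({g₀} : Set G)) :
      T (x * h * g₀ * (x * h)⁻¹) v = T (x * g₀ * x⁻¹) v := by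
    rw [Subgroup.mem_centralizer_singleton_iff] at hh
    rw [mul_assoc x h, hh]
    group
  simp only [hconj]
  rw [integral_smul_eq_integral_average_smul μ _ ν hf₁ hcont hinv,
    integral_smul_eq_integral_average_smul μ _ ν hf₂ hcont hinv]
  simp only [havg]

/-- The weighted class operator map factorizes through averaging over the centralizer:
two continuous weights with the same `Z₀`-averages give the same weighted class operator. -/
theorem weighted_class_operator_factors_through_average
    {G : Type*} [Group G] [TopologicalSpace G] [IsTopologicalGroup G]
    [CompactSpace G] [T2Space G] [MeasurableSpace G] [BorelSpace G]
    (μ : Measure G) [μ.IsHaarMeasure] [IsProbabilityMeasure μ]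
    (g₀ : G)
    [MeasurableSpace (Subgroup.centralizer ({g₀} : Set G))]
    [BorelSpace (Subgroup.centralizer ({g₀} : Set G))]
    (ν : Measure (Subgroup.centralizer ({g₀} : Set G)))
    [ν.IsHaarMeasure] [IsProbabilityMeasure ν]
    {V : Type*} [NormedAddCommGroup V] [InnerProductSpace ℂ V] [CompleteSpace V]
    (T : G → V →L[ℂ] V)
    (hT1 : T 1 = 1)
    (hTmul : ∀ g h : G, T (g * h) = (T g).comp (T h))
    (hTunitary : ∀ (g : G) (v w : V), ⟪T g v, T g w⟫ = ⟪v, w⟫)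
    (hTcont : ∀ v : V, Continuous fun g : G => T g v)
    (f₁ f₂ : G → ℂ) (hf₁ : Continuous f₁) (hf₂ : Continuous f₂)
    (havg : ∀ x : G,
      (∫ h : Subgroup.centralizer ({g₀} : Set G), f₁ (x * (h : G)) ∂ν) =
        ∫ h : Subgroup.centralizer ({g₀} : Set G), f₂ (x * (h : G)) ∂ν) :
    ∀ v : V,
      (∫ x, f₁ x • T x (T g₀ (T x⁻¹ v)) ∂μ) =
        ∫ x, f₂ x • T x (T g₀ (T x⁻¹ v)) ∂μ :=
  weighted_class_operator_factors_through_average_general μ g₀ ν T hTmul hTcont f₁ f₂ hf₁ hf₂ havg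
end

section
/- Let G be a compact Hausdorff topological group with normalized Haar probability measure μ, let π be a continuous irreducible unitary representation of G on a finite-dimensional complex inner product space V of dimension n with orthonormal basis (e₁, …, e_n), character χ(g) = trace(π(g)), and matrix coefficients t_{ij}(g) = ⟪π(g) e_j, e_i⟫. Then for every g₀ ∈ G, every pair of indices i, j and every y ∈ G, the class operator of the left regular representation acts on the conjugate matrix coefficient as the scalar χ(g₀)/n: ∫_G conj(t_{ij}(x g₀⁻¹ x⁻¹ y)) dμ(x) = (χ(g₀)/n) · conj(t_{ij}(y)). -/
/-!
Averaging `π` over the conjugacy class of `g₀` gives the operator `S = ∫ π (x g₀ x⁻¹) dμ(x)`.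
Left invariance of `μ` makes `S` commute with every `π g`, so by Schur's lemma `S` is a scalar;
the trace is invariant under conjugation, so `tr S = χ g₀` and `S = (χ g₀ / n) • 1`.
Unitarity turns `conj (t i j (x g₀⁻¹ x⁻¹ y))` into `⟪π y (b j), π (x g₀ x⁻¹) (b i)⟫`,
whose integral over `x` is `⟪π y (b j), S (b i)⟫`.
-/

open MeasureTheory
open scoped ComplexInnerProductSpace

section Schur

variable {K V ι : Type*} [Field K] [IsAlgClosed K] [AddCommGroup V] [Module K V]
  [FiniteDimensional K V] [Nontrivial V]

theorem Module.End.exists_eq_smul_one_of_forall_commute (ρ : ι → Module.End K V)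
    (hirr : ∀ W : Submodule K V, (∀ i, ∀ v ∈ W, ρ i v ∈ W) → W = ⊥ ∨ W = ⊤)
    {T : Module.End K V} (hT : ∀ i, Commute (ρ i) T) : ∃ c : K, T = c • 1 := by
  obtain ⟨c, hc⟩ := Module.End.exists_eigenvalue T
  have hstable : ∀ i, ∀ v ∈ T.eigenspace c, ρ i v ∈ T.eigenspace c := by
    intro i v hv
    rw [Module.End.mem_eigenspace_iff] at hv ⊢
    rw [← Module.End.mul_apply, ← (hT i).eq, Module.End.mul_apply, hv, map_smul]
  refine ⟨c, ?_⟩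
  rcases hirr _ hstable with h | h
  · exact absurd h (Module.End.hasEigenvalue_iff.mp hc)
  · ext v
    exact Module.End.mem_eigenspace_iff.mp (h ▸ Submodule.mem_top)

theorem Module.End.eq_trace_div_finrank_smul_one_of_forall_commute [CharZero K]
    (ρ : ι → Module.End K V)
    (hirr : ∀ W : Submodule K V, (∀ i, ∀ v ∈ W, ρ i v ∈ W) → W = ⊥ ∨ W = ⊤)
    {T : Module.End K V} (hT : ∀ i, Commute (ρ i) T) :
    T = (LinearMap.trace K V T / Module.finrank K V) • 1 := by
  obtain ⟨c, rfl⟩ := exists_eq_smul_one_of_forall_commute ρ hirr hT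
  have hdim : (Module.finrank K V : K) ≠ 0 := Nat.cast_ne_zero.mpr Module.finrank_pos.ne'
  rw [map_smul, Module.End.one_eq_id, LinearMap.trace_id, smul_eq_mul,
    mul_div_cancel_right₀ _ hdim]

end Schur

theorem MonoidHom.inv_apply_apply {G V : Type*} [Group G] [NormedAddCommGroup V]
    [NormedSpace ℂ V] (ρ : G →* (V →L[ℂ] V)) (g : G) (v : V) : ρ g⁻¹ (ρ g v) = v := by
  rw [← mul_apply_eq_comp, ← map_mul, inv_mul_cancel, map_one, one_apply_eq_self]

theorem inner_apply_eq_inner_inv_apply {G V : Type*} [Group G] [NormedAddCommGroup V]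
    [InnerProductSpace ℂ V] (ρ : G →* (V →L[ℂ] V))
    (hρ : ∀ g (v w : V), ⟪ρ g v, ρ g w⟫ = ⟪v, w⟫) (g : G) (v w : V) :
    ⟪ρ g v, w⟫ = ⟪v, ρ g⁻¹ w⟫ := by
  rw [← hρ g⁻¹, ρ.inv_apply_apply]

theorem trace_map_conj {G V : Type*} [Group G] [NormedAddCommGroup V] [NormedSpace ℂ V]
    [FiniteDimensional ℂ V] (ρ : G →* (V →L[ℂ] V)) (g x : G) :
    LinearMap.trace ℂ V (ρ (x * g * x⁻¹)) = LinearMap.trace ℂ V (ρ g) := by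
  rw [map_mul, ContinuousLinearMap.toLinearMap_mul, LinearMap.trace_mul_comm,
    ← ContinuousLinearMap.toLinearMap_mul, ← map_mul, inv_mul_cancel_left]

section ClassOperator

variable {G V : Type*} [Group G] [TopologicalSpace G] [IsTopologicalGroup G] [CompactSpace G]
  [MeasurableSpace G] [BorelSpace G] (μ : Measure G)
  [NormedAddCommGroup V] [NormedSpace ℂ V] [FiniteDimensional ℂ V]

noncomputable def classOperator (ρ : G →* (V →L[ℂ] V)) (g : G) : V →L[ℂ] V :=
  ∫ x, ρ (x * g * x⁻¹) ∂μ

variable {ρ : G →* (V →L[ℂ] V)}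

theorem integrable_map_conj [IsFiniteMeasure μ] (hρ : ∀ v : V, Continuous (ρ · v)) (g : G) :
    Integrable (fun x => ρ (x * g * x⁻¹)) μ :=
  ((continuous_clm_apply.mpr hρ).comp ((continuous_mul_const g).mul continuous_inv))
    |>.integrable_of_hasCompactSupport (.of_compactSpace _)

theorem commute_classOperator [IsFiniteMeasure μ] [μ.IsMulLeftInvariant]
    (hρ : ∀ v : V, Continuous (ρ · v)) (g₀ g : G) :
    Commute (ρ g) (classOperator μ ρ g₀) := by
  have hconj (x : G) : ρ g * ρ (x * g₀ * x⁻¹) = ρ (g * x * g₀ * (g * x)⁻¹) * ρ g := by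
    rw [← map_mul, ← map_mul]
    congr 1
    group
  calc ρ g * classOperator μ ρ g₀
      = ∫ x, ρ g * ρ (x * g₀ * x⁻¹) ∂μ :=
        (integral_const_mul_of_integrable (integrable_map_conj μ hρ g₀)).symm
    _ = ∫ x, ρ (g * x * g₀ * (g * x)⁻¹) * ρ g ∂μ := by simp only [hconj]
    _ = ∫ x, ρ (x * g₀ * x⁻¹) * ρ g ∂μ :=
        integral_mul_left_eq_self (fun x => ρ (x * g₀ * x⁻¹) * ρ g) g
    _ = classOperator μ ρ g₀ * ρ g :=
        integral_mul_const_of_integrable (integrable_map_conj μ hρ g₀)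

theorem trace_classOperator [IsProbabilityMeasure μ] (hρ : ∀ v : V, Continuous (ρ · v))
    (g : G) : LinearMap.trace ℂ V (classOperator μ ρ g) = LinearMap.trace ℂ V (ρ g) := by
  let trace : (V →L[ℂ] V) →L[ℂ] ℂ :=
    LinearMap.toContinuousLinearMap ((LinearMap.trace ℂ V).comp (ContinuousLinearMap.coeLM ℂ))
  change trace (classOperator μ ρ g) = _
  rw [classOperator, ← trace.integral_comp_comm (integrable_map_conj μ hρ g)]
  change ∫ x, LinearMap.trace ℂ V (ρ (x * g * x⁻¹)) ∂μ = _
  simp only [trace_map_conj, integral_const, probReal_univ, one_smul]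

theorem classOperator_eq_trace_div_finrank_smul_one [Nontrivial V] [IsProbabilityMeasure μ]
    [μ.IsMulLeftInvariant] (hρ : ∀ v : V, Continuous (ρ · v))
    (hirr : ∀ W : Submodule ℂ V, (∀ g : G, ∀ v ∈ W, ρ g v ∈ W) → W = ⊥ ∨ W = ⊤) (g : G) :
    classOperator μ ρ g = (LinearMap.trace ℂ V (ρ g) / Module.finrank ℂ V) • 1 := by
  have hcomm (h : G) : Commute (ρ h : Module.End ℂ V) (classOperator μ ρ g) := by
    simpa only [Commute, SemiconjBy, ← ContinuousLinearMap.toLinearMap_mul]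
      using congrArg ContinuousLinearMap.toLinearMap (commute_classOperator μ hρ g h)
  apply ContinuousLinearMap.coe_injective
  rw [Module.End.eq_trace_div_finrank_smul_one_of_forall_commute _ hirr hcomm,
    trace_classOperator μ hρ]
  rfl

end ClassOperator

theorem class_operator_on_conj_matrix_coefficients_general
    {G : Type*} [Group G] [TopologicalSpace G] [IsTopologicalGroup G]
    [CompactSpace G] [MeasurableSpace G] [BorelSpace G]
    (μ : Measure G) [μ.IsHaarMeasure] [IsProbabilityMeasure μ]
    {V : Type*} [NormedAddCommGroup V] [InnerProductSpace ℂ V]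
    [FiniteDimensional ℂ V] [Nontrivial V]
    (π : G → V →L[ℂ] V)
    (hπ1 : π 1 = 1)
    (hπmul : ∀ g h : G, π (g * h) = (π g).comp (π h))
    (hπunitary : ∀ (g : G) (v w : V), ⟪π g v, π g w⟫ = ⟪v, w⟫)
    (hπcont : ∀ v : V, Continuous fun g : G => π g v)
    (hirr : ∀ W : Submodule ℂ V, (∀ g : G, ∀ v ∈ W, π g v ∈ W) → W = ⊥ ∨ W = ⊤)
    {n : ℕ} (b : OrthonormalBasis (Fin n) ℂ V)
    (t : Fin n → Fin n → G → ℂ)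
    (ht : ∀ (i j : Fin n) (g : G), t i j g = ⟪b i, π g (b j)⟫)
    (χ : G → ℂ) (hχ : ∀ g : G, χ g = LinearMap.trace ℂ V (π g : V →ₗ[ℂ] V))
    (g₀ y : G) (i j : Fin n) :
    (∫ x, (starRingEnd ℂ) (t i j (x * g₀⁻¹ * x⁻¹ * y)) ∂μ) =
      (χ g₀ / (n : ℂ)) * (starRingEnd ℂ) (t i j y) := by
  let ρ : G →* (V →L[ℂ] V) := ⟨⟨π, hπ1⟩, hπmul⟩
  have hint : Integrable (fun x => ρ (x * g₀ * x⁻¹)) μ := integrable_map_conj μ hπcont g₀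
  have hintegrand (x : G) : (starRingEnd ℂ) (t i j (x * g₀⁻¹ * x⁻¹ * y)) =
      ⟪ρ y (b j), ρ (x * g₀ * x⁻¹) (b i)⟫ := by
    rw [ht, inner_conj_symm]
    change ⟪ρ (x * g₀⁻¹ * x⁻¹ * y) (b j), b i⟫ = _
    rw [map_mul, mul_apply_eq_comp, inner_apply_eq_inner_inv_apply ρ hπunitary,
      show (x * g₀⁻¹ * x⁻¹)⁻¹ = x * g₀ * x⁻¹ by group]
  have hn : Module.finrank ℂ V = n := by
    rw [Module.finrank_eq_card_basis b.toBasis, Fintype.card_fin]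
  calc (∫ x, (starRingEnd ℂ) (t i j (x * g₀⁻¹ * x⁻¹ * y)) ∂μ)
      = ⟪ρ y (b j), classOperator μ ρ g₀ (b i)⟫ := by
        simp only [hintegrand, classOperator, ContinuousLinearMap.integral_apply hint]
        exact integral_inner (hint.apply_continuousLinearMap _) _
    _ = (χ g₀ / n) * (starRingEnd ℂ) (t i j y) := by
        rw [classOperator_eq_trace_div_finrank_smul_one μ hπcont hirr, hn, smul_apply,
          one_apply_eq_self, inner_smul_right, ht, inner_conj_symm, hχ]
        rfl

/-- The class operator of the left regular representation acts on conjugate matrix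
coefficients of an irreducible representation `π` as multiplication by `χ(g₀)/n`. -/
theorem class_operator_on_conj_matrix_coefficients
    {G : Type*} [Group G] [TopologicalSpace G] [IsTopologicalGroup G]
    [CompactSpace G] [T2Space G] [MeasurableSpace G] [BorelSpace G]
    (μ : Measure G) [μ.IsHaarMeasure] [IsProbabilityMeasure μ]
    {V : Type*} [NormedAddCommGroup V] [InnerProductSpace ℂ V]
    [FiniteDimensional ℂ V] [Nontrivial V]
    (π : G → V →L[ℂ] V)
    (hπ1 : π 1 = 1)
    (hπmul : ∀ g h : G, π (g * h) = (π g).comp (π h))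
    (hπunitary : ∀ (g : G) (v w : V), ⟪π g v, π g w⟫ = ⟪v, w⟫)
    (hπcont : ∀ v : V, Continuous fun g : G => π g v)
    (hirr : ∀ W : Submodule ℂ V, (∀ g : G, ∀ v ∈ W, π g v ∈ W) → W = ⊥ ∨ W = ⊤)
    {n : ℕ} (b : OrthonormalBasis (Fin n) ℂ V)
    (t : Fin n → Fin n → G → ℂ)
    (ht : ∀ (i j : Fin n) (g : G), t i j g = ⟪b i, π g (b j)⟫)
    (χ : G → ℂ) (hχ : ∀ g : G, χ g = LinearMap.trace ℂ V (π g : V →ₗ[ℂ] V))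
    (g₀ y : G) (i j : Fin n) :
    (∫ x, (starRingEnd ℂ) (t i j (x * g₀⁻¹ * x⁻¹ * y)) ∂μ) =
      (χ g₀ / (n : ℂ)) * (starRingEnd ℂ) (t i j y) :=
  class_operator_on_conj_matrix_coefficients_general μ π hπ1 hπmul hπunitary hπcont hirr b t ht χ hχ
    g₀ y i j
end

section
/- Let G be a compact Hausdorff topological group with normalized Haar probability measure μ, let π be a continuous irreducible unitary representation of G on a finite-dimensional complex inner product space of dimension n with orthonormal basis (e₁, …, e_n) and matrix coefficients t_{sj}(g) = ⟪π(g) e_j, e_s⟫. Fix g₀ ∈ G, a continuous function f : G → ℂ, and an index j. Then the weighted class operator of the left regular representation, ψ ↦ (y ↦ ∫_G f(x) ψ(x g₀⁻¹ x⁻¹ y) dμ(x)), maps the subspace span_ℂ{ y ↦ conj(t_{sj}(y)) : 1 ≤ s ≤ n } of functions on G into itself; that is, for each i there exist complex numbers c₁, …, c_n with ∫_G f(x) conj(t_{ij}(x g₀⁻¹ x⁻¹ y)) dμ(x) = Σ_{s=1}^{n} c_s · conj(t_{sj}(y)) for all y ∈ G. -/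
/-!
Multiplicativity of `π` gives `t i j (g * y) = ∑ s, t i s g * t s j y`. Substituting
`g = x g₀⁻¹ x⁻¹` and integrating against `f`, only the factors `t i s (x g₀⁻¹ x⁻¹)` depend on
`x`, so the integral is a combination of the functions `conj ∘ t s j` whose coefficients are the
(finitely many) integrals `∫ f x * conj (t i s (x g₀⁻¹ x⁻¹)) dμ`.
-/

open MeasureTheory

open scoped InnerProductSpace in
theorem OrthonormalBasis.inner_apply_eq_sum {ι 𝕜 E F : Type*} [Fintype ι] [RCLike 𝕜]
    [NormedAddCommGroup E] [InnerProductSpace 𝕜 E] [NormedAddCommGroup F] [InnerProductSpace 𝕜 F]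
    (b : OrthonormalBasis ι 𝕜 E) (A : E →ₗ[𝕜] F) (x : F) (y : E) :
    ⟪x, A y⟫_𝕜 = ∑ s, ⟪x, A (b s)⟫_𝕜 * ⟪b s, y⟫_𝕜 := by
  conv_lhs => rw [← b.sum_repr' y]
  simp only [map_sum, map_smul, inner_sum, inner_smul_right, mul_comm]

theorem exists_integral_mul_conj_comp_mul_eq_sum {X M ι : Type*} [Fintype ι] [MeasurableSpace X]
    [Mul M] (μ : Measure X) {φ : M → ℂ} {u v : ι → M → ℂ}
    (hφ : ∀ g h, φ (g * h) = ∑ s, u s g * v s h) (k : X → M) (f : X → ℂ)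
    (hint : ∀ s, Integrable (fun x => f x * starRingEnd ℂ (u s (k x))) μ) :
    ∃ c : ι → ℂ, ∀ y,
      ∫ x, f x * starRingEnd ℂ (φ (k x * y)) ∂μ = ∑ s, c s * starRingEnd ℂ (v s y) := by
  refine ⟨fun s => ∫ x, f x * starRingEnd ℂ (u s (k x)) ∂μ, fun y => ?_⟩
  calc ∫ x, f x * starRingEnd ℂ (φ (k x * y)) ∂μ
      = ∫ x, ∑ s, f x * starRingEnd ℂ (u s (k x)) * starRingEnd ℂ (v s y) ∂μ := by
        simp only [hφ, map_sum, map_mul, Finset.mul_sum, mul_assoc]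
    _ = ∑ s, (∫ x, f x * starRingEnd ℂ (u s (k x)) ∂μ) * starRingEnd ℂ (v s y) := by
        rw [integral_finsetSum _ fun s _ => (hint s).mul_const _]
        simp only [integral_mul_const]

open scoped ComplexInnerProductSpace

theorem weighted_class_operator_preserves_conj_coefficient_column_general
    {G : Type*} [Group G] [TopologicalSpace G] [IsTopologicalGroup G]
    [CompactSpace G] [MeasurableSpace G] [BorelSpace G]
    (μ : Measure G) [IsProbabilityMeasure μ]
    {V : Type*} [NormedAddCommGroup V] [InnerProductSpace ℂ V]
    (π : G → V →L[ℂ] V)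
    (hπmul : ∀ g h : G, π (g * h) = (π g).comp (π h))
    (hπcont : ∀ v : V, Continuous fun g : G => π g v)
    {n : ℕ} (b : OrthonormalBasis (Fin n) ℂ V)
    (t : Fin n → Fin n → G → ℂ)
    (ht : ∀ (i j : Fin n) (g : G), t i j g = ⟪b i, π g (b j)⟫)
    (g₀ : G) (f : G → ℂ) (hf : Continuous f) (j : Fin n) :
    ∀ i : Fin n, ∃ c : Fin n → ℂ, ∀ y : G,
      (∫ x, f x * (starRingEnd ℂ) (t i j (x * g₀⁻¹ * x⁻¹ * y)) ∂μ) =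
        ∑ s : Fin n, c s * (starRingEnd ℂ) (t s j y) := by
  intro i
  have ht_cont : ∀ p q, Continuous (t p q) := fun p q => by
    simpa only [funext (ht p q)] using continuous_const.inner (hπcont (b q))
  refine exists_integral_mul_conj_comp_mul_eq_sum μ (u := t i) (v := fun s => t s j)
    (fun g h => ?_) (fun x => x * g₀⁻¹ * x⁻¹) f fun s => ?_
  · simp only [ht, hπmul, ContinuousLinearMap.comp_apply]
    exact b.inner_apply_eq_sum (π g : V →ₗ[ℂ] V) _ _
  · exact (hf.mul ((ht_cont i s).comp (by fun_prop)).star).integrable_of_hasCompactSupport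
      (.of_compactSpace _)

/-- The weighted class operator of the left regular representation maps the span of the
`j`-th column of conjugate matrix coefficients of an irreducible representation `π`
into itself. -/
theorem weighted_class_operator_preserves_conj_coefficient_column
    {G : Type*} [Group G] [TopologicalSpace G] [IsTopologicalGroup G]
    [CompactSpace G] [T2Space G] [MeasurableSpace G] [BorelSpace G]
    (μ : Measure G) [μ.IsHaarMeasure] [IsProbabilityMeasure μ]
    {V : Type*} [NormedAddCommGroup V] [InnerProductSpace ℂ V]
    [FiniteDimensional ℂ V] [Nontrivial V]
    (π : G → V →L[ℂ] V)
    (hπ1 : π 1 = 1)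
    (hπmul : ∀ g h : G, π (g * h) = (π g).comp (π h))
    (hπunitary : ∀ (g : G) (v w : V), ⟪π g v, π g w⟫ = ⟪v, w⟫)
    (hπcont : ∀ v : V, Continuous fun g : G => π g v)
    (hirr : ∀ W : Submodule ℂ V, (∀ g : G, ∀ v ∈ W, π g v ∈ W) → W = ⊥ ∨ W = ⊤)
    {n : ℕ} (b : OrthonormalBasis (Fin n) ℂ V)
    (t : Fin n → Fin n → G → ℂ)
    (ht : ∀ (i j : Fin n) (g : G), t i j g = ⟪b i, π g (b j)⟫)
    (g₀ : G) (f : G → ℂ) (hf : Continuous f) (j : Fin n) :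
    ∀ i : Fin n, ∃ c : Fin n → ℂ, ∀ y : G,
      (∫ x, f x * (starRingEnd ℂ) (t i j (x * g₀⁻¹ * x⁻¹ * y)) ∂μ) =
        ∑ s : Fin n, c s * (starRingEnd ℂ) (t s j y) :=
  weighted_class_operator_preserves_conj_coefficient_column_general μ π hπmul hπcont b t ht g₀ f hf
    j
end
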